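/- arXiv:math-ph/0611057 — 3 statements merged into one kernel-verified Lean document; each statement's English description precedes it below -/
import Mathlib

section
/- If T : M_d → M_d is a positive trace-preserving linear map, then the determinant of T (as a linear map on the d²-dimensional complex vector space M_d) is a real number lying in the interval [−1, 1]. -/
open Matrix
open scoped Kronecker ComplexOrder

noncomputable section

/-- `Mat d` is the space `M_d` of `d × d` complex matrices. -/
abbrev Mat (d : ℕ) := Matrix (Fin d) (Fin d) ℂ

/-- A linear map on `M_d` is trace-preserving if it preserves the trace. -/
def IsTracePreserving {d : ℕ} (T : Mat d →ₗ[ℂ] Mat d) : Prop :=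
  ∀ A : Mat d, (T A).trace = A.trace

/-- A linear map on `M_d` is positive if it maps positive semidefinite matrices to
positive semidefinite matrices. -/
def IsPositiveMap {d : ℕ} (T : Mat d →ₗ[ℂ] Mat d) : Prop :=
  ∀ A : Mat d, A.PosSemidef → (T A).PosSemidef

/-!
Positive semidefinite matrices span `M_d`. A positive map sends them to Hermitian matrices,
so it commutes with `A ↦ Aᴴ`; in the basis of matrix units this says that the matrix of `T`
is conjugate, by a permutation, to its entrywise complex conjugate, hence `det T` is real.
Powers of `T` are again positive and trace-preserving, and the entries of a positive
semidefinite matrix are bounded by its trace, so every orbit `(T ^ m) A` is bounded. Hence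
every eigenvalue of `T` has modulus at most `1`, and so has their product `det T`.
-/

namespace Matrix

variable {n : Type*} [Fintype n]

theorem stdBasis_repr_apply {R m : Type*} [Semiring R] [Finite m] (A : Matrix n m R)
    (ij : n × m) : (stdBasis R n m).repr A ij = A ij.1 ij.2 := by
  simp [stdBasis, Module.Basis.map_repr, Module.Basis.repr_reindex]

theorem mem_span_posSemidef [DecidableEq n] (A : Matrix n n ℂ) :
    A ∈ Submodule.span ℂ {P : Matrix n n ℂ | P.PosSemidef} := by
  open scoped Matrix.Norms.L2Operator MatrixOrder in
  simp only [← nonneg_iff_posSemidef, CStarAlgebra.span_nonneg, Submodule.mem_top]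

theorem PosSemidef.norm_apply_le {𝕜 : Type*} [RCLike 𝕜] {A : Matrix n n 𝕜} (hA : A.PosSemidef)
    (i j : n) : ‖A i j‖ ≤ (RCLike.re (A i i) + RCLike.re (A j j)) / 2 := by
  classical
  open scoped Matrix.Norms.L2Operator MatrixOrder in
  obtain ⟨B, rfl⟩ := CStarAlgebra.nonneg_iff_eq_star_mul_self.mp hA.nonneg
  have re_diag (l : n) : RCLike.re ((star B * B) l l) = ∑ k, ‖B k l‖ ^ 2 := by
    simp only [mul_apply, star_apply, RCLike.star_def, RCLike.conj_mul]
    norm_cast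
  rw [re_diag, re_diag, ← Finset.sum_add_distrib, Finset.sum_div, mul_apply]
  refine (norm_sum_le _ _).trans (Finset.sum_le_sum fun k _ => ?_)
  rw [norm_mul, star_apply, norm_star]
  nlinarith [sq_nonneg (‖B k i‖ - ‖B k j‖)]

theorem PosSemidef.norm_apply_le_trace {𝕜 : Type*} [RCLike 𝕜] {A : Matrix n n 𝕜}
    (hA : A.PosSemidef) (i j : n) : ‖A i j‖ ≤ RCLike.re A.trace := by
  have diag_le (l : n) : RCLike.re (A l l) ≤ RCLike.re A.trace := by
    rw [trace, map_sum]
    exact Finset.single_le_sum (f := fun k => RCLike.re (A k k))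
      (fun k _ => (RCLike.nonneg_iff.mp hA.diag_nonneg).1) (Finset.mem_univ l)
  linarith [hA.norm_apply_le i j, diag_le i, diag_le j]

end Matrix

theorem norm_le_one_of_forall_norm_pow_mul_le {𝕜 : Type*} [NormedDivisionRing 𝕜] {μ z : 𝕜}
    (hz : z ≠ 0) {C : ℝ} (h : ∀ m : ℕ, ‖μ ^ m * z‖ ≤ C) : ‖μ‖ ≤ 1 := by
  by_contra! hμ
  obtain ⟨m, hm⟩ := pow_unbounded_of_one_lt (C / ‖z‖) hμ
  rw [div_lt_iff₀ (norm_pos_iff.mpr hz)] at hm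
  have := h m
  rw [norm_mul, norm_pow] at this
  linarith

namespace LinearMap

theorem norm_det_le_one_of_forall_hasEigenvalue {𝕜 V : Type*} [NormedField 𝕜] [IsAlgClosed 𝕜]
    [AddCommGroup V] [Module 𝕜 V] [FiniteDimensional 𝕜 V] {f : Module.End 𝕜 V}
    (hf : ∀ μ, f.HasEigenvalue μ → ‖μ‖ ≤ 1) : ‖LinearMap.det f‖ ≤ 1 := by
  rw [← coe_nnnorm, NNReal.coe_le_one,
    Module.End.det_eq_prod_roots_charpoly_of_splits (IsAlgClosed.splits _)]
  calc ‖f.charpoly.roots.prod‖₊ = (f.charpoly.roots.map (‖·‖₊)).prod :=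
        map_multiset_prod nnnormHom _
    _ ≤ 1 ^ (f.charpoly.roots.map (‖·‖₊)).card := by
        refine Multiset.prod_le_pow_card _ 1 ?_
        simp only [Multiset.mem_map]
        rintro _ ⟨μ, hμ, rfl⟩
        exact NNReal.coe_le_one.mp <| hf μ <|
          (Module.End.hasEigenvalue_iff_isRoot_charpoly f μ).mpr (Polynomial.isRoot_of_mem_roots hμ)
    _ = 1 := one_pow _

theorem star_det_eq_of_map_conjTranspose {R n : Type*} [CommRing R] [StarRing R]
    [Fintype n] [DecidableEq n] {T : Matrix n n R →ₗ[R] Matrix n n R}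
    (hT : ∀ A, T Aᴴ = (T A)ᴴ) : star (LinearMap.det T) = LinearMap.det T := by
  set b := stdBasis R n n
  set M := LinearMap.toMatrix b b T
  have hM : M.map star = M.submatrix Prod.swap Prod.swap := by
    ext ⟨p, q⟩ ⟨r, s⟩
    simp only [map_apply, submatrix_apply, Prod.swap_prod_mk, M, b, LinearMap.toMatrix_apply,
      stdBasis_eq_single, stdBasis_repr_apply]
    rw [show Matrix.single s r (1 : R) = (Matrix.single r s 1)ᴴ by simp [conjTranspose_single], hT]
    rfl
  rw [← LinearMap.det_toMatrix b, ← starRingEnd_apply, RingHom.map_det, RingHom.mapMatrix_apply]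
  exact congrArg det hM |>.trans (det_submatrix_equiv_self (Equiv.prodComm n n) M)

variable {n : Type*} [Fintype n] [DecidableEq n] {T : Matrix n n ℂ →ₗ[ℂ] Matrix n n ℂ}

theorem map_conjTranspose_of_isHermitian_map_posSemidef
    (hT : ∀ A, A.PosSemidef → (T A).IsHermitian) (A : Matrix n n ℂ) : T Aᴴ = (T A)ᴴ := by
  induction mem_span_posSemidef A using Submodule.span_induction with
  | mem P hP => rw [hP.isHermitian.eq, (hT P hP).eq]
  | zero => simp
  | add A B _ _ hA hB => simp [hA, hB]
  | smul c A _ hA => simp [hA]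

variable (hpos : ∀ A, A.PosSemidef → (T A).PosSemidef) (htp : ∀ A, (T A).trace = A.trace)
include hpos htp

theorem exists_forall_norm_pow_apply_le (A : Matrix n n ℂ) (i j : n) :
    ∃ C, ∀ m : ℕ, ‖(T ^ m) A i j‖ ≤ C := by
  have pow_posSemidef (m : ℕ) {P : Matrix n n ℂ} (hP : P.PosSemidef) :
      ((T ^ m) P).PosSemidef ∧ ((T ^ m) P).trace = P.trace := by
    induction m with
    | zero => exact ⟨hP, rfl⟩
    | succ m ih =>
      rw [pow_succ', Module.End.mul_apply, htp]
      exact ⟨hpos _ ih.1, ih.2⟩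
  induction mem_span_posSemidef A using Submodule.span_induction with
  | mem P hP =>
    refine ⟨P.trace.re, fun m => ?_⟩
    obtain ⟨hpsd, htr⟩ := pow_posSemidef m hP
    simpa [htr] using hpsd.norm_apply_le_trace i j
  | zero => exact ⟨0, by simp⟩
  | add A B _ _ hA hB =>
    obtain ⟨C, hC⟩ := hA
    obtain ⟨D, hD⟩ := hB
    exact ⟨C + D, fun m => by simpa using (norm_add_le _ _).trans (add_le_add (hC m) (hD m))⟩
  | smul c A _ hA =>
    obtain ⟨C, hC⟩ := hA
    exact ⟨‖c‖ * C, fun m => by simpa using mul_le_mul_of_nonneg_left (hC m) (norm_nonneg c)⟩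

theorem norm_le_one_of_hasEigenvalue {μ : ℂ} (hμ : Module.End.HasEigenvalue T μ) : ‖μ‖ ≤ 1 := by
  obtain ⟨A, hA⟩ := hμ.exists_hasEigenvector
  obtain ⟨i, j, hij⟩ : ∃ i j, A i j ≠ 0 := by
    by_contra! h
    exact hA.2 (Matrix.ext h)
  obtain ⟨C, hC⟩ := exists_forall_norm_pow_apply_le hpos htp A i j
  exact norm_le_one_of_forall_norm_pow_mul_le hij fun m => by simpa [hA.pow_apply] using hC m

end LinearMap

/-- the determinant of a positive trace-preserving linear map on `M_d`
is a real number lying in the interval `[-1, 1]`. -/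
theorem det_of_positive_tracePreserving_mem_Icc {d : ℕ}
    (T : Mat d →ₗ[ℂ] Mat d) (hpos : IsPositiveMap T) (htp : IsTracePreserving T) :
    ∃ r : ℝ, LinearMap.det T = (r : ℂ) ∧ -1 ≤ r ∧ r ≤ 1 := by
  have hreal : starRingEnd ℂ (LinearMap.det T) = LinearMap.det T :=
    LinearMap.star_det_eq_of_map_conjTranspose <|
      LinearMap.map_conjTranspose_of_isHermitian_map_posSemidef fun A hA => (hpos A hA).isHermitian
  have hnorm : ‖LinearMap.det T‖ ≤ 1 :=
    LinearMap.norm_det_le_one_of_forall_hasEigenvalue fun _ hμ =>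
      LinearMap.norm_le_one_of_hasEigenvalue hpos htp hμ
  exact ⟨(LinearMap.det T).re, (Complex.conj_eq_iff_re.mp hreal).symm,
    abs_le.mp ((Complex.abs_re_le_norm _).trans hnorm)⟩
end
end

section
/- Let d ≥ 2 and define the corner transposition ρ ↦ ρ^{T_c} on M_d by (ρ^{T_c})_{k,l} = ρ_{l,k} for (k,l) ∈ {(0, d−1), (d−1, 0)} and (ρ^{T_c})_{k,l} = ρ_{k,l} otherwise (indices in Fin d). Then the linear map T(ρ) = (ρ^{T_c} + tr(ρ)·𝟙)/(1+d) on M_d is trace-preserving and completely positive, its Choi matrix has rank d² − 1, and det T = −(d+1)^{1−d²}. -/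
open Matrix
open scoped Kronecker ComplexOrder

noncomputable section

/-- The Choi matrix `C(T) = Σ_{i,j} E_{ij} ⊗ T(E_{ij})` of a linear map on `M_d`. -/
def choi {d : ℕ} (T : Mat d →ₗ[ℂ] Mat d) :
    Matrix (Fin d × Fin d) (Fin d × Fin d) ℂ :=
  ∑ i : Fin d, ∑ j : Fin d,
    (Matrix.single i j (1 : ℂ)) ⊗ₖ T (Matrix.single i j (1 : ℂ))

/-- A linear map on `M_d` is completely positive if its Choi matrix is positive
semidefinite. -/
def IsCompletelyPositive {d : ℕ} (T : Mat d →ₗ[ℂ] Mat d) : Prop :=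
  (choi T).PosSemidef

/-- A quantum channel is a completely positive trace-preserving linear map. -/
def IsChannel {d : ℕ} (T : Mat d →ₗ[ℂ] Mat d) : Prop :=
  IsTracePreserving T ∧ IsCompletelyPositive T

/-- The corner transposition on `M_d` (`d = n + 2 ≥ 2`): it transposes the two corner
entries `(0, d-1)` and `(d-1, 0)` and leaves all other entries unchanged. -/
def cornerTranspose {n : ℕ} (ρ : Mat (n + 2)) : Mat (n + 2) :=
  Matrix.of fun k l =>
    if (k = 0 ∧ l = Fin.last (n + 1)) ∨ (k = Fin.last (n + 1) ∧ l = 0) then ρ l k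
    else ρ k l

/-! Write `(1 + d) T = Θ + Φ` with `Θ` the corner transposition and `Φ ρ = tr ρ • 𝟙`.

`Θ` permutes the entries of a matrix by the transposition of the positions `(0, d-1)` and
`(d-1, 0)`, so `det Θ = -1`; since `Θ 𝟙 = 𝟙` we have `Θ + Φ = Θ ∘ (id + Φ)`, and `id + Φ` is a
rank-one perturbation of the identity with determinant `1 + tr 𝟙 = 1 + d`.

With `L = d - 1`, the Choi matrix of `Θ + Φ` is `ΩΩ* + uu* + vv* + D`, where `Ω = Σₖ eₖ ⊗ eₖ`,
`u = e₀ ⊗ e₀ - e_L ⊗ e_L`, `v = e₀ ⊗ e_L + e_L ⊗ e₀` and `D` is the diagonal projection onto the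
coordinates other than `(0,0), (L,L), (0,L), (L,0)`. Hence it is positive semidefinite, and its
kernel is the intersection of the kernels of the four summands, which is spanned by
`e₀ ⊗ e_L - e_L ⊗ e₀`. -/

theorem LinearMap.det_id_add_smulRight {R M : Type*} [CommRing R] [AddCommGroup M] [Module R M]
    [Module.Free R M] [Module.Finite R M] (f : M →ₗ[R] R) (v : M) :
    LinearMap.det (LinearMap.id + f.smulRight v) = 1 + f v := by
  let b := Module.Free.chooseBasis R M
  rw [← LinearMap.det_toMatrix b, map_add, LinearMap.toMatrix_id, LinearMap.toMatrix_smulRight,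
    vecMulVec_eq Unit, det_one_add_replicateCol_mul_replicateRow]
  conv_rhs => rw [← b.sum_repr v]
  simp only [dotProduct, map_sum, map_smul, smul_eq_mul, Function.comp_apply, mul_comm]

theorem LinearMap.det_funLeft_perm {R ι : Type*} [CommRing R] [Fintype ι] [DecidableEq ι]
    (σ : Equiv.Perm ι) : LinearMap.det (LinearMap.funLeft R R ⇑σ) = Equiv.Perm.sign σ := by
  have : LinearMap.funLeft R R ⇑σ = toLin' ((1 : Matrix ι ι R).submatrix σ _root_.id) := by
    ext x i
    simp [mulVec, dotProduct, one_apply]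
  rw [this, LinearMap.det_toLin', det_permute, det_one, mul_one]

theorem Matrix.trace_single_one {m R : Type*} [Fintype m] [DecidableEq m] [Semiring R]
    (a c : m) : (single a c (1 : R)).trace = if a = c then 1 else 0 := by
  split_ifs with h
  · rw [h, trace_single_eq_same]
  · exact trace_single_eq_of_ne a c 1 h

theorem Matrix.PosSemidef.mulVec_eq_zero_of_add {ι 𝕜 : Type*} [Fintype ι] [RCLike 𝕜]
    {A B : Matrix ι ι 𝕜} (hA : A.PosSemidef) (hB : B.PosSemidef) {x : ι → 𝕜}
    (h : (A + B) *ᵥ x = 0) : A *ᵥ x = 0 ∧ B *ᵥ x = 0 := by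
  rw [← (hA.add hB).dotProduct_mulVec_zero_iff, add_mulVec, dotProduct_add,
    add_eq_zero_iff_of_nonneg (hA.dotProduct_mulVec_nonneg x) (hB.dotProduct_mulVec_nonneg x)] at h
  exact ⟨(hA.dotProduct_mulVec_zero_iff x).1 h.1, (hB.dotProduct_mulVec_zero_iff x).1 h.2⟩

theorem Matrix.dotProduct_eq_zero_of_vecMulVec_mulVec_eq_zero {ι R : Type*} [Fintype ι]
    [CommRing R] [NoZeroDivisors R] {a b x : ι → R} (ha : a ≠ 0)
    (h : vecMulVec a b *ᵥ x = 0) : b ⬝ᵥ x = 0 := by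
  rw [vecMulVec_mulVec, op_smul_eq_smul, smul_eq_zero] at h
  exact h.resolve_right ha

theorem choi_apply {d : ℕ} (T : Mat d →ₗ[ℂ] Mat d) (p q : Fin d × Fin d) :
    choi T p q = T (single p.1 q.1 1) p.2 q.2 := by
  simp only [choi, Matrix.sum_apply, kroneckerMap_apply, single]
  simp [of_apply, ite_and, Finset.sum_ite_eq']

namespace CornerChoi

variable {ι : Type*} [DecidableEq ι] (i j : ι)

def maxEntangled : ι × ι → ℂ := fun p => if p.1 = p.2 then 1 else 0

def diagDiff : ι × ι → ℂ := Pi.single (i, i) 1 - Pi.single (j, j) 1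

def offDiagSum : ι × ι → ℂ := Pi.single (i, j) 1 + Pi.single (j, i) 1

def offDiagDiff : ι × ι → ℂ := Pi.single (i, j) 1 - Pi.single (j, i) 1

def support : Finset (ι × ι) := {(i, i), (j, j), (i, j), (j, i)}

/-- `(1 + d)` times the Choi matrix of the channel, for the corner positions `i, j`
(see `matrix_apply`). -/
def matrix : Matrix (ι × ι) (ι × ι) ℂ :=
  vecMulVec maxEntangled (star maxEntangled) + vecMulVec (diagDiff i j) (star (diagDiff i j)) +
    vecMulVec (offDiagSum i j) (star (offDiagSum i j)) +
    diagonal fun p => if p ∈ support i j then 0 else 1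

variable {i j}

theorem matrix_apply (hij : i ≠ j) (a b c e : ι) :
    matrix i j (a, b) (c, e) =
      (if (b = i ∧ e = j) ∨ (b = j ∧ e = i) then (if a = e ∧ c = b then 1 else 0)
        else if a = b ∧ c = e then 1 else 0) + if a = c ∧ b = e then 1 else 0 := by
  have trichotomy : ∀ x : ι, x = i ∨ x = j ∨ (x ≠ i ∧ x ≠ j) := by tauto
  simp only [matrix, Matrix.add_apply, vecMulVec_apply, diagonal_apply, maxEntangled, diagDiff,
    offDiagSum, support, Pi.star_apply, Pi.sub_apply, Pi.add_apply, Pi.single_apply, Prod.ext_iff,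
    Finset.mem_insert, Finset.mem_singleton]
  rcases trichotomy a with rfl | rfl | ⟨_, _⟩ <;>
    rcases trichotomy b with rfl | rfl | ⟨_, _⟩ <;>
    rcases trichotomy c with rfl | rfl | ⟨_, _⟩ <;>
    rcases trichotomy e with rfl | rfl | ⟨_, _⟩ <;>
    clear trichotomy <;> simp_all [eq_comm, ← ite_and, and_comm]

theorem offDiagDiff_apply_diag (hij : i ≠ j) (k : ι) : offDiagDiff i j (k, k) = 0 := by
  rcases eq_or_ne k i with rfl | hki <;> simp [offDiagDiff, *]

theorem offDiagDiff_apply_of_notMem {p : ι × ι} (hp : p ∉ support i j) :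
    offDiagDiff i j p = 0 := by
  simp only [support, Finset.mem_insert, Finset.mem_singleton, not_or] at hp
  simp [offDiagDiff, hp.2.2.1, hp.2.2.2]

theorem posSemidef_diagonal_support :
    (diagonal fun p => if p ∈ support i j then (0 : ℂ) else 1).PosSemidef :=
  posSemidef_diagonal_iff.2 fun p => by split_ifs <;> norm_num

variable [Fintype ι]

theorem star_maxEntangled_dotProduct (x : ι × ι → ℂ) :
    star maxEntangled ⬝ᵥ x = ∑ k, x (k, k) := by
  simp [maxEntangled, dotProduct, Fintype.sum_prod_type, ite_mul]

theorem star_diagDiff_dotProduct (x : ι × ι → ℂ) :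
    star (diagDiff i j) ⬝ᵥ x = x (i, i) - x (j, j) := by
  simp [diagDiff, star_sub, sub_dotProduct, single_dotProduct]

theorem star_offDiagSum_dotProduct (x : ι × ι → ℂ) :
    star (offDiagSum i j) ⬝ᵥ x = x (i, j) + x (j, i) := by
  simp [offDiagSum, star_add, add_dotProduct, single_dotProduct]

variable (i j) in
theorem posSemidef_matrix : (matrix i j).PosSemidef :=
  (((posSemidef_vecMulVec_self_star _).add (posSemidef_vecMulVec_self_star _)).add
    (posSemidef_vecMulVec_self_star _)).add posSemidef_diagonal_support

theorem matrix_mulVec_offDiagDiff (hij : i ≠ j) : matrix i j *ᵥ offDiagDiff i j = 0 := by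
  have hsum : star (offDiagSum i j) ⬝ᵥ offDiagDiff i j = 0 := by
    rw [star_offDiagSum_dotProduct]
    simp [offDiagDiff, hij, hij.symm]
  ext p
  simp only [matrix, add_mulVec, vecMulVec_mulVec, op_smul_eq_smul, Pi.add_apply, Pi.smul_apply,
    mulVec_diagonal, star_maxEntangled_dotProduct, star_diagDiff_dotProduct, hsum,
    offDiagDiff_apply_diag hij]
  by_cases hp : p ∈ support i j <;> simp [hp, offDiagDiff_apply_of_notMem]

theorem eqns_of_matrix_mulVec_eq_zero (hij : i ≠ j) {x : ι × ι → ℂ}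
    (hx : matrix i j *ᵥ x = 0) :
    ∑ k, x (k, k) = 0 ∧ x (i, i) = x (j, j) ∧ x (i, j) + x (j, i) = 0 ∧
      ∀ p ∉ support i j, x p = 0 := by
  have psd := fun a : ι × ι → ℂ => posSemidef_vecMulVec_self_star a
  obtain ⟨hx, hD⟩ :=
    (((psd _).add (psd _)).add (psd _)).mulVec_eq_zero_of_add posSemidef_diagonal_support hx
  obtain ⟨hx, hv⟩ := ((psd _).add (psd _)).mulVec_eq_zero_of_add (psd _) hx
  obtain ⟨hΩ, hu⟩ := (psd _).mulVec_eq_zero_of_add (psd _) hx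
  refine ⟨?_, ?_, ?_, fun p hp => by simpa [mulVec_diagonal, hp] using congrFun hD p⟩
  · rw [← star_maxEntangled_dotProduct]
    refine dotProduct_eq_zero_of_vecMulVec_mulVec_eq_zero (fun h => ?_) hΩ
    simpa [maxEntangled] using congrFun h (i, i)
  · rw [← sub_eq_zero, ← star_diagDiff_dotProduct]
    refine dotProduct_eq_zero_of_vecMulVec_mulVec_eq_zero (fun h => ?_) hu
    simpa [diagDiff, Pi.single_apply, hij] using congrFun h (i, i)
  · rw [← star_offDiagSum_dotProduct]
    refine dotProduct_eq_zero_of_vecMulVec_mulVec_eq_zero (fun h => ?_) hv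
    simpa [offDiagSum, Pi.single_apply, hij] using congrFun h (i, j)

theorem eq_smul_offDiagDiff_of_mulVec_eq_zero (hij : i ≠ j) {x : ι × ι → ℂ}
    (hx : matrix i j *ᵥ x = 0) : x = x (i, j) • offDiagDiff i j := by
  obtain ⟨htrace, hdiag, hoff, hout⟩ := eqns_of_matrix_mulVec_eq_zero hij hx
  have hii : x (i, i) = 0 := by
    rw [Fintype.sum_eq_add i j hij fun k hk => hout _ (by simp [support, hk.1, hk.2]),
      ← hdiag] at htrace
    linear_combination htrace / 2
  ext p
  by_cases hp : p ∈ support i j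
  · simp only [support, Finset.mem_insert, Finset.mem_singleton] at hp
    rcases hp with rfl | rfl | rfl | rfl <;>
      simp [offDiagDiff, hij, hij.symm, hii, ← hdiag]
    linear_combination hoff
  · simp [hout p hp, offDiagDiff_apply_of_notMem hp]

theorem ker_mulVecLin_matrix (hij : i ≠ j) :
    LinearMap.ker (matrix i j).mulVecLin = ℂ ∙ offDiagDiff i j := by
  refine le_antisymm (fun x hx => ?_) ?_
  · exact Submodule.mem_span_singleton.2
      ⟨x (i, j), (eq_smul_offDiagDiff_of_mulVec_eq_zero hij hx).symm⟩
  · exact (Submodule.span_singleton_le_iff_mem _ _).2 (matrix_mulVec_offDiagDiff hij)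

theorem rank_matrix (hij : i ≠ j) : (matrix i j).rank = Fintype.card ι ^ 2 - 1 := by
  have hw : offDiagDiff i j ≠ 0 := fun h => by
    simpa [offDiagDiff, Pi.single_apply, hij] using congrFun h (i, j)
  have h := LinearMap.finrank_range_add_finrank_ker (matrix i j).mulVecLin
  rw [ker_mulVecLin_matrix hij, finrank_span_singleton hw, Module.finrank_fintype_fun_eq_card,
    Fintype.card_prod, ← sq] at h
  rw [Matrix.rank]
  omega

end CornerChoi

section CornerTranspose

variable {n : ℕ}

local notation "L" => Fin.last (n + 1)

theorem Fin.zero_ne_last : (0 : Fin (n + 2)) ≠ L := (Fin.last_pos).ne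

variable (n) in
def cornerSwap : Equiv.Perm (Fin (n + 2) × Fin (n + 2)) := Equiv.swap (0, L) (L, 0)

theorem cornerTranspose_apply (ρ : Mat (n + 2)) (k l : Fin (n + 2)) :
    cornerTranspose ρ k l = ρ (cornerSwap n (k, l)).1 (cornerSwap n (k, l)).2 := by
  simp only [cornerTranspose, of_apply, cornerSwap, Equiv.swap_apply_def, Prod.ext_iff]
  split_ifs <;> simp_all

theorem trace_cornerTranspose (ρ : Mat (n + 2)) : (cornerTranspose ρ).trace = ρ.trace := by
  simp [trace, cornerTranspose]

theorem cornerTranspose_one : cornerTranspose (1 : Mat (n + 2)) = 1 := by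
  ext k l
  simp only [cornerTranspose, of_apply]
  split_ifs with h
  · rcases h with ⟨rfl, rfl⟩ | ⟨rfl, rfl⟩ <;> simp [one_apply]
  · rfl

variable (n) in
def cornerTransposeₗ : Mat (n + 2) →ₗ[ℂ] Mat (n + 2) :=
  let e := (LinearEquiv.curry ℂ ℂ (Fin (n + 2)) (Fin (n + 2))).trans (Matrix.ofLinearEquiv ℂ)
  e ∘ₗ LinearMap.funLeft ℂ ℂ (cornerSwap n) ∘ₗ e.symm

theorem cornerTransposeₗ_apply (ρ : Mat (n + 2)) :
    cornerTransposeₗ n ρ = cornerTranspose ρ := by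
  ext k l
  simp [cornerTransposeₗ, cornerTranspose_apply]
  rfl

theorem det_cornerTransposeₗ : LinearMap.det (cornerTransposeₗ n) = -1 := by
  rw [cornerTransposeₗ, LinearMap.det_conj, LinearMap.det_funLeft_perm, cornerSwap,
    Equiv.Perm.sign_swap (by simp)]
  simp

variable (n) in
def cornerChannel : Mat (n + 2) →ₗ[ℂ] Mat (n + 2) :=
  (1 + ((n + 2 : ℕ) : ℂ))⁻¹ •
    (cornerTransposeₗ n + (traceLinearMap (Fin (n + 2)) ℂ ℂ).smulRight 1)

theorem cornerChannel_apply (ρ : Mat (n + 2)) :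
    cornerChannel n ρ =
      (1 + ((n + 2 : ℕ) : ℂ))⁻¹ • (cornerTranspose ρ + ρ.trace • 1) := by
  simp [cornerChannel, cornerTransposeₗ_apply]

theorem isTracePreserving_cornerChannel : IsTracePreserving (cornerChannel n) := by
  intro ρ
  have hd : 1 + ((n + 2 : ℕ) : ℂ) ≠ 0 := by positivity
  rw [cornerChannel_apply, trace_smul, trace_add, trace_cornerTranspose, trace_smul, trace_one,
    Fintype.card_fin, smul_eq_mul, smul_eq_mul]
  field_simp

theorem cornerTransposeₗ_comp_id_add :
    cornerTransposeₗ n ∘ₗ (.id + (traceLinearMap (Fin (n + 2)) ℂ ℂ).smulRight 1) =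
      cornerTransposeₗ n + (traceLinearMap (Fin (n + 2)) ℂ ℂ).smulRight 1 := by
  ext1 ρ
  simp only [LinearMap.comp_apply, LinearMap.add_apply, LinearMap.id_apply,
    LinearMap.smulRight_apply, map_add, map_smul, cornerTransposeₗ_apply, cornerTranspose_one]

theorem det_cornerChannel :
    LinearMap.det (cornerChannel n) =
      -(((n + 2 : ℕ) : ℂ) + 1) ^ ((1 : ℤ) - ((n + 2 : ℕ) : ℤ) ^ 2) := by
  have hd : ((n + 2 : ℕ) : ℂ) + 1 ≠ 0 := by positivity
  rw [cornerChannel, LinearMap.det_smul, ← cornerTransposeₗ_comp_id_add, LinearMap.det_comp,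
    det_cornerTransposeₗ, LinearMap.det_id_add_smulRight, Module.finrank_matrix,
    traceLinearMap_apply, trace_one, Module.finrank_self, Fintype.card_fin, mul_one,
    add_comm (1 : ℂ),
    show (1 : ℤ) - ((n + 2 : ℕ) : ℤ) ^ 2 = 1 - ((n + 2) * (n + 2) : ℕ) by push_cast; ring,
    zpow_sub₀ hd, zpow_one, zpow_natCast, inv_pow]
  ring

theorem choi_cornerChannel :
    choi (cornerChannel n) = (1 + ((n + 2 : ℕ) : ℂ))⁻¹ • CornerChoi.matrix 0 L := by
  ext ⟨a, b⟩ ⟨c, e⟩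
  simp only [choi_apply, cornerChannel_apply, Matrix.smul_apply,
    CornerChoi.matrix_apply Fin.zero_ne_last]
  rw [Matrix.add_apply, Matrix.smul_apply, trace_single_one]
  congr 2
  by_cases hac : a = c <;> simp [hac, one_apply]

end CornerTranspose

/-- for `d = n + 2 ≥ 2`, the map `T(ρ) = (ρ^{T_c} + tr(ρ)·𝟙)/(1+d)` is
trace-preserving and completely positive, its Choi matrix has rank `d² - 1`, and
`det T = -(d+1)^(1-d²)`. -/
theorem cornerTranspose_channel_properties {n : ℕ} (d : ℕ) (hd : d = n + 2)
    (T : Mat (n + 2) →ₗ[ℂ] Mat (n + 2))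
    (hT : ∀ ρ : Mat (n + 2),
      T ρ = (1 + (d : ℂ))⁻¹ • (cornerTranspose ρ + ρ.trace • (1 : Mat (n + 2)))) :
    IsTracePreserving T ∧ IsCompletelyPositive T ∧
      (choi T).rank = d ^ 2 - 1 ∧
      LinearMap.det T = -((d : ℂ) + 1) ^ ((1 : ℤ) - (d : ℤ) ^ 2) := by
  subst hd
  obtain rfl : T = cornerChannel n :=
    LinearMap.ext fun ρ => (hT ρ).trans (cornerChannel_apply ρ).symm
  have hc : (1 + ((n + 2 : ℕ) : ℂ))⁻¹ ≠ 0 := by positivity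
  refine ⟨isTracePreserving_cornerChannel, ?_, ?_, det_cornerChannel⟩
  · rw [IsCompletelyPositive, choi_cornerChannel]
    exact (CornerChoi.posSemidef_matrix _ _).smul (by positivity)
  · rw [choi_cornerChannel,
      rank_smul_of_mem_nonZeroDivisors _ (mem_nonZeroDivisors_of_ne_zero hc),
      CornerChoi.rank_matrix Fin.zero_ne_last, Fintype.card_fin]
end
end

section
/- Let m ≥ 1, let F : Fin m → M_d be matrices with tr(F_α) = 0 for all α and tr(F_α† F_β) = δ_{αβ}, let H ∈ M_d be Hermitian, and let G be an m×m positive semidefinite complex matrix. Define the linear map L : M_d → M_d by L(ρ) = i(ρH − Hρ) + Σ_{α,β} G_{αβ} ( F_α ρ F_β† − ½ (F_β† F_α ρ + ρ F_β† F_α) ). Then det(exp L) = exp(−d · tr G), where exp L is the exponential of L in the Banach algebra of linear maps on M_d and det is the determinant of a linear endomorphism of the d²-dimensional complex vector space M_d. -/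
open Matrix
open scoped Kronecker ComplexOrder

noncomputable section

/- Equip `M_d` with the Frobenius (Hilbert-Schmidt) norm, making the continuous linear
endomorphisms of `M_d` a Banach algebra with the induced operator norm. -/
attribute [local instance] Matrix.frobeniusNormedAddCommGroup Matrix.frobeniusNormedSpace

instance matFrobTopologicalSpace (d : ℕ) : TopologicalSpace (Mat d) :=
  (Matrix.frobeniusNormedAddCommGroup (α := ℂ)).toUniformSpace.toTopologicalSpace

/-!
For any operator `L` on a finite-dimensional complex space, `det (exp L) = exp (tr L)`:
`t ↦ det (exp (t • L))` is a differentiable homomorphism `(ℂ, +) → (ℂ, ·)`, so it is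
`t ↦ exp (c t)` with `c` its derivative at `0`. By the chain rule `c` is the derivative of `det`
at the identity in the direction `L`, which is `tr L` because
`det (1 + h • L) = 1 + h tr L + O(h²)`.

For the Lindblad generator, `tr (ρ ↦ A ρ B) = tr A · tr B`. The Hamiltonian part contributes
`d tr H - d tr H = 0`, the sandwich terms `F_α ρ F_β†` vanish because the `F_α` are traceless,
and by orthonormality the anticommutator terms give `-d ∑_α G_αα`.
-/

section DetDeriv

variable {𝕜 : Type*} [NontriviallyNormedField 𝕜]

theorem Matrix.hasDerivAt_det_one_add_smul {n : Type*} [Fintype n] [DecidableEq n]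
    (M : Matrix n n 𝕜) : HasDerivAt (fun h : 𝕜 => (1 + h • M).det) M.trace 0 := by
  let p : Polynomial 𝕜 :=
    (det (1 + (Polynomial.X : Polynomial 𝕜) • M.map Polynomial.C)).divX.divX
  have hpoly := (((hasDerivAt_id (0 : 𝕜)).const_mul M.trace).add
    ((p.hasDerivAt 0).mul (hasDerivAt_pow 2 (0 : 𝕜)))).const_add 1
  refine (hpoly.congr_deriv (by simp)).congr_of_eventuallyEq (.of_forall fun r => ?_)
  simp [det_one_add_smul r M, p, add_assoc]

theorem LinearMap.hasDerivAt_det_one_add_smul {E : Type*} [AddCommGroup E] [Module 𝕜 E]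
    [Module.Free 𝕜 E] [Module.Finite 𝕜 E] (f : E →ₗ[𝕜] E) :
    HasDerivAt (fun h : 𝕜 => LinearMap.det (1 + h • f)) (LinearMap.trace 𝕜 E f) 0 := by
  let b := Module.Free.chooseBasis 𝕜 E
  rw [LinearMap.trace_eq_matrix_trace 𝕜 b]
  convert (LinearMap.toMatrix b b f).hasDerivAt_det_one_add_smul using 2 with h
  rw [← LinearMap.det_toMatrix b, map_add, map_smul, LinearMap.toMatrix_one]

variable [CompleteSpace 𝕜] {E : Type*} [NormedAddCommGroup E] [NormedSpace 𝕜 E]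
  [FiniteDimensional 𝕜 E]

theorem ContinuousLinearMap.differentiable_det :
    Differentiable 𝕜 fun T : E →L[𝕜] E => T.det := by
  let b := Module.finBasis 𝕜 E
  have hentry (i j) : Differentiable 𝕜 fun T : E →L[𝕜] E => LinearMap.toMatrix b b T i j :=
    (LinearMap.proj j ∘ₗ LinearMap.proj i ∘ₗ (LinearMap.toMatrix b b).toLinearMap ∘ₗ
      ContinuousLinearMap.coeLM 𝕜).toContinuousLinearMap.differentiable
  simp_rw [ContinuousLinearMap.det, ← LinearMap.det_toMatrix b, Matrix.det_apply]
  fun_prop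

theorem ContinuousLinearMap.fderiv_det_one_apply (T : E →L[𝕜] E) :
    fderiv 𝕜 (fun S : E →L[𝕜] E => S.det) 1 T = LinearMap.trace 𝕜 E T := by
  have hline : HasDerivAt (fun h : 𝕜 => 1 + h • T) T 0 := by
    simpa using ((hasDerivAt_id (0 : 𝕜)).smul_const T).const_add 1
  refine ((differentiable_det 1).hasFDerivAt.comp_hasDerivAt_of_eq 0 hline (by simp)).unique ?_
  exact (T : E →ₗ[𝕜] E).hasDerivAt_det_one_add_smul

end DetDeriv

theorem Complex.eq_exp_of_map_add_of_hasDerivAt_zero {f : ℂ → ℂ} {τ : ℂ}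
    (hadd : ∀ s t, f (s + t) = f s * f t) (h0 : f 0 = 1) (hτ : HasDerivAt f τ 0) (t : ℂ) :
    f t = Complex.exp (τ * t) := by
  have hf (s : ℂ) : HasDerivAt f (f s * τ) s := by
    have hshift : HasDerivAt (fun u => f (u - s)) τ s := .comp_sub_const s s (by rwa [sub_self])
    exact (hshift.const_mul (f s)).congr_of_eventuallyEq
      (.of_forall fun u => by simp only [← hadd, add_sub_cancel])
  have hg (s : ℂ) : HasDerivAt (fun u => f u * Complex.exp (-(τ * u))) 0 s :=
    ((hf s).mul (((hasDerivAt_id s).const_mul τ).neg.cexp)).congr_deriv (by simp; ring)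
  have hconst := is_const_of_deriv_eq_zero (fun s => (hg s).differentiableAt)
    (fun s => (hg s).deriv) t 0
  rwa [mul_zero, neg_zero, Complex.exp_zero, h0, one_mul, Complex.exp_neg,
    mul_inv_eq_one₀ (Complex.exp_ne_zero _)] at hconst

theorem ContinuousLinearMap.det_exp {E : Type*} [NormedAddCommGroup E] [NormedSpace ℂ E]
    [FiniteDimensional ℂ E] (L : E →L[ℂ] E) :
    (NormedSpace.exp L).det = Complex.exp (LinearMap.trace ℂ E L) := by
  have : CompleteSpace E := FiniteDimensional.complete ℂ E
  -- `NormedSpace.exp_add_of_commute` is stated for Banach algebras over `ℚ`.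
  let +nondep : NormedAlgebra ℚ (E →L[ℂ] E) := .restrictScalars ℚ ℂ (E →L[ℂ] E)
  let f : ℂ → ℂ := fun t => (NormedSpace.exp (t • L)).det
  have hadd (s t : ℂ) : f (s + t) = f s * f t := by
    simp only [f, add_smul,
      NormedSpace.exp_add_of_commute (((Commute.refl L).smul_left s).smul_right t)]
    exact LinearMap.det_comp _ _
  have h0 : f 0 = 1 := by simp [f, ContinuousLinearMap.det]
  have hτ : HasDerivAt f (LinearMap.trace ℂ E L) 0 := by
    have := (differentiable_det _).hasFDerivAt.comp_hasDerivAt 0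
      (hasDerivAt_exp_smul_const L (0 : ℂ))
    simp only [zero_smul, NormedSpace.exp_zero, one_mul, fderiv_det_one_apply] at this
    exact this
  simpa [f] using Complex.eq_exp_of_map_add_of_hasDerivAt_zero hadd h0 hτ 1

section MatrixTrace

open LinearMap (mulLeft mulRight mulLeft_apply mulRight_apply)

variable {R : Type*} [CommRing R] {m n : Type*} [Fintype m] [Fintype n]

@[simp]
theorem Matrix.stdBasis_repr_apply_s7 (M : Matrix m n R) (i : m) (j : n) :
    (stdBasis R m n).repr M (i, j) = M i j := by
  simp [stdBasis]

theorem Matrix.trace_linearMap_eq_sum [DecidableEq m] (f : Matrix m m R →ₗ[R] Matrix m m R) :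
    LinearMap.trace R _ f = ∑ i, ∑ j, f (single i j 1) i j := by
  rw [LinearMap.trace_eq_matrix_trace R (stdBasis R m m), Matrix.trace, Fintype.sum_prod_type]
  simp [LinearMap.toMatrix_apply, stdBasis_eq_single]

theorem Matrix.trace_mulRight_comp_mulLeft (A B : Matrix n n R) :
    LinearMap.trace R _ (mulRight R B ∘ₗ mulLeft R A) = A.trace * B.trace := by
  classical
  have hentry (i j : n) : (A * single i j (1 : R) * B) i j = A i i * B j j := by
    rw [mul_apply, Finset.sum_eq_single j (fun k _ hk => by simp [hk]) (by simp)]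
    simp
  simp only [trace_linearMap_eq_sum, LinearMap.comp_apply, mulLeft_apply, mulRight_apply, hentry,
    Matrix.trace, diag_apply, Finset.sum_mul_sum]

theorem Matrix.trace_mulLeft (A : Matrix n n R) :
    LinearMap.trace R _ (mulLeft R A) = A.trace * Fintype.card n := by
  classical
  simpa using trace_mulRight_comp_mulLeft A 1

theorem Matrix.trace_mulRight (B : Matrix n n R) :
    LinearMap.trace R _ (mulRight R B) = Fintype.card n * B.trace := by
  classical
  simpa using trace_mulRight_comp_mulLeft 1 B

end MatrixTrace

section Lindbladian

open LinearMap (mulLeft mulRight)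

variable {n ι : Type*} [Fintype n] [Fintype ι]

def lindbladian (H : Matrix n n ℂ) (G : Matrix ι ι ℂ) (F : ι → Matrix n n ℂ) :
    Matrix n n ℂ →ₗ[ℂ] Matrix n n ℂ :=
  Complex.I • (mulRight ℂ H - mulLeft ℂ H) +
    ∑ α, ∑ β, G α β • (mulRight ℂ (F β)ᴴ ∘ₗ mulLeft ℂ (F α) -
      (2 : ℂ)⁻¹ • (mulLeft ℂ ((F β)ᴴ * F α) + mulRight ℂ ((F β)ᴴ * F α)))

theorem lindbladian_apply (H : Matrix n n ℂ) (G : Matrix ι ι ℂ) (F : ι → Matrix n n ℂ)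
    (ρ : Matrix n n ℂ) :
    lindbladian H G F ρ = Complex.I • (ρ * H - H * ρ) +
      ∑ α, ∑ β, G α β • (F α * ρ * (F β)ᴴ -
        (2 : ℂ)⁻¹ • ((F β)ᴴ * F α * ρ + ρ * ((F β)ᴴ * F α))) := by
  simp [lindbladian, Matrix.mul_assoc]

theorem trace_lindbladian [DecidableEq ι] {F : ι → Matrix n n ℂ}
    (hFtr : ∀ α, (F α).trace = 0)
    (hFon : ∀ α β, ((F α)ᴴ * F β).trace = if α = β then 1 else 0)
    (H : Matrix n n ℂ) (G : Matrix ι ι ℂ) :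
    LinearMap.trace ℂ _ (lindbladian H G F) = -(Fintype.card n : ℂ) * G.trace := by
  have hhamiltonian : LinearMap.trace ℂ _ (mulRight ℂ H - mulLeft ℂ H) = 0 := by
    rw [map_sub, trace_mulLeft, trace_mulRight, mul_comm, sub_self]
  have hdissipator (α β : ι) : LinearMap.trace ℂ _
      (mulRight ℂ (F β)ᴴ ∘ₗ mulLeft ℂ (F α) -
        (2 : ℂ)⁻¹ • (mulLeft ℂ ((F β)ᴴ * F α) + mulRight ℂ ((F β)ᴴ * F α))) =
      -(Fintype.card n : ℂ) * if β = α then 1 else 0 := by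
    simp only [map_sub, map_smul, map_add, trace_mulRight_comp_mulLeft, trace_mulLeft,
      trace_mulRight, hFtr, hFon, smul_eq_mul]
    ring
  simp only [lindbladian, map_add, map_smul, map_sum, hhamiltonian, hdissipator, smul_eq_mul]
  simp [Matrix.trace, Finset.mul_sum, mul_comm]

end Lindbladian

theorem det_exp_lindblad_general {d m : ℕ}
    (F : Fin m → Mat d)
    (hFtr : ∀ α : Fin m, (F α).trace = 0)
    (hFon : ∀ α β : Fin m, ((F α)ᴴ * F β).trace = if α = β then 1 else 0)
    (H : Mat d)
    (G : Matrix (Fin m) (Fin m) ℂ)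
    (L : Mat d →L[ℂ] Mat d)
    (hL : ∀ ρ : Mat d, L ρ =
      Complex.I • (ρ * H - H * ρ) +
        ∑ α : Fin m, ∑ β : Fin m, G α β •
          (F α * ρ * (F β)ᴴ -
            (2 : ℂ)⁻¹ • ((F β)ᴴ * F α * ρ + ρ * ((F β)ᴴ * F α)))) :
    LinearMap.det ((NormedSpace.exp L : Mat d →L[ℂ] Mat d) : Mat d →ₗ[ℂ] Mat d) =
      Complex.exp (-(d : ℂ) * G.trace) := by
  have hL' : (L : Mat d →ₗ[ℂ] Mat d) = lindbladian H G F :=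
    LinearMap.ext fun ρ => (hL ρ).trans (lindbladian_apply H G F ρ).symm
  refine (ContinuousLinearMap.det_exp L).trans ?_
  rw [hL', trace_lindbladian hFtr hFon, Fintype.card_fin]

/-- for a Lindblad (GKLS) generator `L` on `M_d` built from a Hamiltonian
`H`, traceless orthonormal operators `F_α` and a positive semidefinite matrix `G`,
the determinant of `exp L` equals `exp (-d · tr G)`. -/
theorem det_exp_lindblad {d m : ℕ} (hm : 1 ≤ m)
    (F : Fin m → Mat d)
    (hFtr : ∀ α : Fin m, (F α).trace = 0)
    (hFon : ∀ α β : Fin m, ((F α)ᴴ * F β).trace = if α = β then 1 else 0)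
    (H : Mat d) (hH : H.IsHermitian)
    (G : Matrix (Fin m) (Fin m) ℂ) (hG : G.PosSemidef)
    (L : Mat d →L[ℂ] Mat d)
    (hL : ∀ ρ : Mat d, L ρ =
      Complex.I • (ρ * H - H * ρ) +
        ∑ α : Fin m, ∑ β : Fin m, G α β •
          (F α * ρ * (F β)ᴴ -
            (2 : ℂ)⁻¹ • ((F β)ᴴ * F α * ρ + ρ * ((F β)ᴴ * F α)))) :
    LinearMap.det ((NormedSpace.exp L : Mat d →L[ℂ] Mat d) : Mat d →ₗ[ℂ] Mat d) =
      Complex.exp (-(d : ℂ) * G.trace) :=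
  det_exp_lindblad_general F hFtr hFon H G L hL
end
end
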